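/- arXiv:2509.16270 — 4 statements merged into one kernel-verified Lean document; each statement's English description precedes it below -/
import Mathlib

section
/- Let c be a code of a partial recursive function and x a natural number. Define the coefficient sequence a_n = n! if the step-bounded evaluation of c on x within n steps has halted (i.e., (Nat.Partrec.Code.evaln n c x).isSome), and a_n = 0 otherwise. Then: (1) if c does not halt on x (i.e., ¬(c.eval x).Dom), then a_n = 0 for all n and the power series ∑ a_n z^n converges (to 0) at every complex z; (2) if c halts on x (i.e., (c.eval x).Dom), then the power series ∑ a_n z^n converges at z = 0 and diverges at every complex z ≠ 0. -/
open Filter Finset Nat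

/-- The coefficient sequence of the reduction: `a n = n!` if the step-bounded
evaluation of `c` on `x` within `n` steps has halted, and `0` otherwise. -/
def haltCoeff (c : Nat.Partrec.Code) (x : ℕ) (n : ℕ) : ℕ :=
  if (Nat.Partrec.Code.evaln n c x).isSome then n ! else 0

lemma haltCoeff_zero (c : Nat.Partrec.Code) (x : ℕ) : haltCoeff c x 0 = 0 := by
  simp [haltCoeff, Nat.Partrec.Code.evaln]

lemma tendsto_fact_mul_pow (r : ℝ) (hr : 0 < r) :
    Tendsto (fun n : ℕ => (n ! : ℝ) * r ^ n) atTop atTop := by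
  have h := FloorSemiring.tendsto_pow_div_factorial_atTop (r⁻¹)
  have hpos : ∀ᶠ n : ℕ in atTop, 0 < (r⁻¹) ^ n / (n ! : ℝ) := by
    filter_upwards [] with n
    positivity
  have := Filter.Tendsto.inv_tendsto_nhdsGT_zero
    (tendsto_nhdsWithin_of_tendsto_nhds_of_eventually_within _ h hpos)
  refine this.congr fun n => ?_
  simp only [Pi.inv_apply]
  rw [inv_div]
  field_simp
  rw [← mul_pow, one_div, inv_mul_cancel₀ hr.ne', one_pow]

/-- (1) If `c` does not halt on `x`, then all coefficients vanish and the power series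
`∑ a_n z^n` converges to `0` at every complex `z`.
(2) If `c` halts on `x`, then the power series converges at `z = 0` and diverges
at every complex `z ≠ 0`. -/
theorem halting_power_series_dichotomy (c : Nat.Partrec.Code) (x : ℕ) :
    (¬ (c.eval x).Dom →
      (∀ n, haltCoeff c x n = 0) ∧
      ∀ z : ℂ, Tendsto
        (fun N : ℕ => ∑ n ∈ Finset.range N, (haltCoeff c x n : ℂ) * z ^ n)
        atTop (nhds 0)) ∧
    ((c.eval x).Dom →
      (∃ L : ℂ, Tendsto
        (fun N : ℕ => ∑ n ∈ Finset.range N, (haltCoeff c x n : ℂ) * (0 : ℂ) ^ n)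
        atTop (nhds L)) ∧
      ∀ z : ℂ, z ≠ 0 → ¬ ∃ L : ℂ, Tendsto
        (fun N : ℕ => ∑ n ∈ Finset.range N, (haltCoeff c x n : ℂ) * z ^ n)
        atTop (nhds L)) := by
  constructor
  · intro hnd
    have hz : ∀ n, haltCoeff c x n = 0 := by
      intro n
      unfold haltCoeff
      rw [if_neg]
      intro hs
      obtain ⟨y, hy⟩ := Option.isSome_iff_exists.mp hs
      exact hnd ((Nat.Partrec.Code.evaln_sound hy).fst)
    refine ⟨hz, fun z => ?_⟩
    have : (fun N : ℕ => ∑ n ∈ Finset.range N, (haltCoeff c x n : ℂ) * z ^ n)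
        = fun _ => 0 := by
      funext N; apply Finset.sum_eq_zero; intro n _; simp [hz n]
    rw [this]; exact tendsto_const_nhds
  · intro hd
    constructor
    · refine ⟨0, ?_⟩
      have : (fun N : ℕ => ∑ n ∈ Finset.range N, (haltCoeff c x n : ℂ) * (0 : ℂ) ^ n)
          = fun _ => 0 := by
        funext N; apply Finset.sum_eq_zero; intro n _
        rcases Nat.eq_zero_or_pos n with h | h
        · simp [h, haltCoeff_zero]
        · simp [zero_pow h.ne']
      rw [this]; exact tendsto_const_nhds
    · rintro z hz ⟨L, hL⟩
      -- halt at some stage k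
      obtain ⟨y, hy⟩ := Part.dom_iff_mem.mp hd
      obtain ⟨k, hk⟩ := Nat.Partrec.Code.evaln_complete.mp hy
      have hcoeff : ∀ n ≥ k, haltCoeff c x n = n ! := by
        intro n hn
        unfold haltCoeff
        rw [if_pos]
        exact Option.isSome_iff_exists.mpr ⟨y, Nat.Partrec.Code.evaln_mono hn hk⟩
      -- terms tend to 0
      have hterm : Tendsto (fun N : ℕ => (haltCoeff c x N : ℂ) * z ^ N) atTop (nhds 0) := by
        have h1 := (hL.comp (tendsto_add_atTop_nat 1)).sub hL
        rw [sub_self] at h1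
        refine h1.congr fun N => ?_
        simp [Finset.sum_range_succ]
      have hnorm : Tendsto (fun N : ℕ => (N ! : ℝ) * ‖z‖ ^ N) atTop (nhds 0) := by
        have := hterm.norm
        rw [norm_zero] at this
        refine (this.congr' ?_)
        filter_upwards [eventually_ge_atTop k] with n hn
        rw [hcoeff n hn]
        simp [norm_pow]
      exact absurd hnorm
        ((tendsto_fact_mul_pow ‖z‖ (norm_pos_iff.mpr hz)).not_tendsto
        ((disjoint_nhds_atTop 0).symm))
end

section
/- Let c be a code of a partial recursive function and x a natural number, and let a_n = n! if (Nat.Partrec.Code.evaln n c x).isSome and a_n = 0 otherwise. Then the power series ∑ a_n z^n converges at some complex z ≠ 0 if and only if c does not halt on x (i.e., ¬(c.eval x).Dom). Equivalently, it diverges at every z ≠ 0 if and only if c halts on x. -/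
open Filter Finset Nat

lemma haltCoeff_eq_zero_of_not_dom (c : Nat.Partrec.Code) (x : ℕ)
    (h : ¬ (c.eval x).Dom) (n : ℕ) : haltCoeff c x n = 0 := by
  rw [haltCoeff, if_neg]
  intro hs
  obtain ⟨a, ha⟩ := Option.isSome_iff_exists.1 hs
  exact h ((Nat.Partrec.Code.evaln_sound ha).1)

lemma nohalt_conv (c : Nat.Partrec.Code) (x : ℕ) (h : ¬ (c.eval x).Dom) :
    ∃ z : ℂ, z ≠ 0 ∧ ∃ L : ℂ, Tendsto
      (fun N : ℕ => ∑ n ∈ Finset.range N, (haltCoeff c x n : ℂ) * z ^ n)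
      atTop (nhds L) := by
  refine ⟨1, one_ne_zero, 0, ?_⟩
  have : (fun N : ℕ => ∑ n ∈ Finset.range N, (haltCoeff c x n : ℂ) * (1:ℂ) ^ n)
      = fun _ => (0:ℂ) := by
    funext N
    simp [haltCoeff_eq_zero_of_not_dom c x h]
  rw [this]
  exact tendsto_const_nhds

lemma halt_div (c : Nat.Partrec.Code) (x : ℕ) (h : (c.eval x).Dom) (z : ℂ) (hz : z ≠ 0) :
    ¬ ∃ L : ℂ, Tendsto
      (fun N : ℕ => ∑ n ∈ Finset.range N, (haltCoeff c x n : ℂ) * z ^ n)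
      atTop (nhds L) := by
  rintro ⟨L, hL⟩
  -- terms tend to 0
  have hterm : Tendsto (fun n : ℕ => (haltCoeff c x n : ℂ) * z ^ n) atTop (nhds 0) := by
    have h1 : Tendsto (fun N : ℕ => ∑ n ∈ Finset.range (N+1), (haltCoeff c x n : ℂ) * z ^ n)
        atTop (nhds L) := hL.comp (tendsto_add_atTop_nat 1)
    have := h1.sub hL
    simp only [sub_self] at this
    convert this using 2 with n
    rw [Finset.sum_range_succ]
    ring
  -- c halts, so eventually haltCoeff = n!
  obtain ⟨a, ha⟩ := Part.dom_iff_mem.1 h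
  obtain ⟨k, hk⟩ := Nat.Partrec.Code.evaln_complete.1 ha
  have hcoef : ∀ n ≥ k, haltCoeff c x n = n ! := by
    intro n hn
    rw [haltCoeff, if_pos]
    exact Option.isSome_iff_exists.2 ⟨a, Nat.Partrec.Code.evaln_mono hn hk⟩
  -- but ‖n! z^n‖ → ∞
  have hzpos : 0 < ‖z‖ := norm_pos_iff.2 hz
  have hfact : Tendsto (fun n : ℕ => (n ! : ℝ) * ‖z‖ ^ n) atTop atTop := by
    have h0 : Tendsto (fun n : ℕ => (‖z‖⁻¹) ^ n / (n ! : ℝ)) atTop (nhds 0) :=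
      FloorSemiring.tendsto_pow_div_factorial_atTop _
    have hpos : ∀ n : ℕ, 0 < (‖z‖⁻¹) ^ n / (n ! : ℝ) := fun n =>
      div_pos (pow_pos (inv_pos.2 hzpos) n) (Nat.cast_pos.2 n.factorial_pos)
    have h0' : Tendsto (fun n : ℕ => (‖z‖⁻¹) ^ n / (n ! : ℝ)) atTop (nhdsWithin 0 (Set.Ioi 0)) :=
      tendsto_nhdsWithin_of_tendsto_nhds_of_eventually_within _ h0
        (Filter.Eventually.of_forall hpos)
    have := h0'.inv_tendsto_nhdsGT_zero
    convert this using 2 with n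
    simp only [Pi.inv_apply]
    field_simp
    rw [← mul_pow, mul_one_div_cancel hzpos.ne', one_pow]
  have hnorm : Tendsto (fun n : ℕ => ‖(haltCoeff c x n : ℂ) * z ^ n‖) atTop atTop := by
    apply hfact.congr'
    filter_upwards [eventually_ge_atTop k] with n hn
    rw [hcoef n hn]
    simp [norm_mul]
  have h0 : Tendsto (fun n : ℕ => ‖(haltCoeff c x n : ℂ) * z ^ n‖) atTop (nhds 0) := by
    simpa using hterm.norm
  exact not_tendsto_nhds_of_tendsto_atTop hnorm 0 h0

/-- The power series `∑ a_n z^n` converges at some complex `z ≠ 0` iff `c` does not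
halt on `x`; equivalently, it diverges at every `z ≠ 0` iff `c` halts on `x`. -/
theorem halting_iff_power_series_convergence (c : Nat.Partrec.Code) (x : ℕ) :
    ((∃ z : ℂ, z ≠ 0 ∧ ∃ L : ℂ, Tendsto
        (fun N : ℕ => ∑ n ∈ Finset.range N, (haltCoeff c x n : ℂ) * z ^ n)
        atTop (nhds L)) ↔ ¬ (c.eval x).Dom) ∧
    ((∀ z : ℂ, z ≠ 0 → ¬ ∃ L : ℂ, Tendsto
        (fun N : ℕ => ∑ n ∈ Finset.range N, (haltCoeff c x n : ℂ) * z ^ n)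
        atTop (nhds L)) ↔ (c.eval x).Dom) := by
  constructor
  · constructor
    · rintro ⟨z, hz, hL⟩ hdom
      exact halt_div c x hdom z hz hL
    · exact nohalt_conv c x
  · constructor
    · intro hall
      by_contra hdom
      obtain ⟨z, hz, hL⟩ := nohalt_conv c x hdom
      exact hall z hz hL
    · exact halt_div c x
end

section
/- Determining whether a power series converges at some nonzero point is undecidable: the predicate on pairs (c, x) that holds exactly when the power series with coefficients a_n = n!·[evaln n c x has halted] converges at some complex z ≠ 0 is not a computable predicate. -/
open Filter Finset Nat

lemma haltCoeff_key (c : Nat.Partrec.Code) (x : ℕ) :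
    (∃ z : ℂ, z ≠ 0 ∧ ∃ L : ℂ, Tendsto
        (fun N : ℕ => ∑ n ∈ Finset.range N, (haltCoeff c x n : ℂ) * z ^ n)
        atTop (nhds L)) ↔ ¬ (Nat.Partrec.Code.eval c x).Dom := by
  constructor
  · rintro ⟨z, hz, L, hL⟩ hdom
    obtain ⟨y, hy⟩ := Part.dom_iff_mem.mp hdom
    obtain ⟨k, hk⟩ := Nat.Partrec.Code.evaln_complete.mp hy
    have hterm : Tendsto (fun N : ℕ => (haltCoeff c x N : ℂ) * z ^ N) atTop (nhds 0) := by
      have h1 := (hL.comp (tendsto_add_atTop_nat 1)).sub hL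
      rw [sub_self] at h1
      refine h1.congr fun N => ?_
      simp [Finset.sum_range_succ]
    have hnorm : Tendsto (fun N : ℕ => ‖(haltCoeff c x N : ℂ) * z ^ N‖) atTop (nhds 0) := by
      simpa using hterm.norm
    have hr : (0 : ℝ) < ‖z‖ := norm_pos_iff.mpr hz
    have htop : Tendsto (fun n : ℕ => (n ! : ℝ) * ‖z‖ ^ n) atTop atTop := by
      have h0 : Tendsto (fun n : ℕ => (‖z‖⁻¹) ^ n / (n ! : ℝ)) atTop (nhds 0) :=
        FloorSemiring.tendsto_pow_div_factorial_atTop _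
      have hpos : ∀ n : ℕ, (0 : ℝ) < (‖z‖⁻¹) ^ n / (n ! : ℝ) := fun n =>
        div_pos (pow_pos (inv_pos.mpr hr) n) (by positivity)
      have h0' : Tendsto (fun n : ℕ => (‖z‖⁻¹) ^ n / (n ! : ℝ)) atTop (nhdsWithin 0 (Set.Ioi 0)) :=
        tendsto_nhdsWithin_of_tendsto_nhds_of_eventually_within _ h0
          (Eventually.of_forall fun n => hpos n)
      have := h0'.comp (tendsto_id (α := ℕ))
      have hinv : Tendsto (fun n : ℕ => ((‖z‖⁻¹) ^ n / (n ! : ℝ))⁻¹) atTop atTop :=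
        h0'.inv_tendsto_nhdsGT_zero
      refine hinv.congr fun n => ?_
      rw [inv_div, div_eq_mul_inv, ← inv_pow, inv_inv]
    have heq : ∀ᶠ n in atTop, (n ! : ℝ) * ‖z‖ ^ n = ‖(haltCoeff c x n : ℂ) * z ^ n‖ := by
      filter_upwards [eventually_ge_atTop k] with n hn
      have hs : (Nat.Partrec.Code.evaln n c x).isSome :=
        Option.isSome_iff_exists.mpr ⟨y, Nat.Partrec.Code.evaln_mono hn hk⟩
      simp [haltCoeff, hs, norm_pow, abs_of_pos hr]
    have := htop.congr' heq
    exact not_tendsto_atTop_of_tendsto_nhds hnorm this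
  · intro hdom
    refine ⟨1, one_ne_zero, 0, ?_⟩
    have hcoeff : ∀ n, haltCoeff c x n = 0 := by
      intro n
      unfold haltCoeff
      rw [if_neg]
      intro hs
      obtain ⟨y, hy⟩ := Option.isSome_iff_exists.mp hs
      exact hdom (Part.dom_iff_mem.mpr ⟨y, Nat.Partrec.Code.evaln_sound hy⟩)
    have : (fun N : ℕ => ∑ n ∈ Finset.range N, (haltCoeff c x n : ℂ) * (1:ℂ) ^ n)
        = fun _ => (0 : ℂ) := by
      funext N; simp [hcoeff]
    rw [this]
    exact tendsto_const_nhds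

/-- Determining whether a power series converges at some nonzero point is
undecidable: the predicate on `(c, x)` asserting that the power series with
coefficients `haltCoeff c x` converges at some complex `z ≠ 0` is not computable. -/
theorem power_series_convergence_undecidable :
    ¬ ComputablePred (fun p : Nat.Partrec.Code × ℕ =>
      ∃ z : ℂ, z ≠ 0 ∧ ∃ L : ℂ, Tendsto
        (fun N : ℕ => ∑ n ∈ Finset.range N, (haltCoeff p.1 p.2 n : ℂ) * z ^ n)
        atTop (nhds L)) := by
  intro h
  obtain ⟨f, hf, hfeq⟩ := ComputablePred.computable_iff.mp h
  have hcomp : Computable fun c : Nat.Partrec.Code => f (c, 0) :=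
    hf.comp (Computable.id.pair (Computable.const 0))
  have h2 : ComputablePred fun c : Nat.Partrec.Code => ¬ (Nat.Partrec.Code.eval c 0).Dom := by
    refine ComputablePred.computable_iff.mpr ⟨_, hcomp, ?_⟩
    funext c
    rw [← haltCoeff_key c 0]
    exact congrFun hfeq (c, 0)
  have h3 := h2.not
  have h4 : ComputablePred fun c : Nat.Partrec.Code => (Nat.Partrec.Code.eval c 0).Dom := by
    exact ComputablePred.of_eq h3 fun c => by simp
  exact ComputablePred.halting_problem 0 h4
end

section
/- Determining convergence at z = 1 is undecidable: the predicate on pairs (c, x) that holds exactly when the series ∑_n a_n converges, where a_n = n! if (evaln n c x).isSome and a_n = 0 otherwise, is not a computable predicate. -/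
open Filter Finset Nat

lemma haltCoeff_converges_iff (c : Nat.Partrec.Code) (x : ℕ) :
    (∃ L : ℝ, Filter.Tendsto
        (fun N : ℕ => ∑ n ∈ Finset.range N, (haltCoeff c x n : ℝ))
        atTop (nhds L)) ↔ ¬ (Nat.Partrec.Code.eval c x).Dom := by
  constructor
  · rintro ⟨L, hL⟩ hdom
    obtain ⟨y, hy⟩ := Part.dom_iff_mem.1 hdom
    obtain ⟨k, hk⟩ := Nat.Partrec.Code.evaln_complete.1 hy
    -- terms tend to 0
    have hterm : Filter.Tendsto (fun N : ℕ => (haltCoeff c x N : ℝ)) atTop (nhds 0) := by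
      have := hL.comp (tendsto_add_atTop_nat 1)
      have h2 := this.sub hL
      simp only [Function.comp, Finset.sum_range_succ] at h2
      simpa using h2
    have hbig : ∀ᶠ N in atTop, (1 : ℝ) ≤ (haltCoeff c x N : ℝ) := by
      filter_upwards [Filter.eventually_ge_atTop k] with N hN
      have : (Nat.Partrec.Code.evaln N c x).isSome := by
        have := Nat.Partrec.Code.evaln_mono hN hk
        exact Option.isSome_iff_exists.2 ⟨y, this⟩
      simp only [haltCoeff, this, if_true]
      exact_mod_cast Nat.one_le_iff_ne_zero.2 (Nat.factorial_ne_zero N)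
    have : (1 : ℝ) ≤ 0 := ge_of_tendsto hterm hbig
    linarith
  · intro hdom
    refine ⟨0, ?_⟩
    have hz : ∀ n, haltCoeff c x n = 0 := by
      intro n
      simp only [haltCoeff, ite_eq_right_iff]
      intro hs
      obtain ⟨y, hy⟩ := Option.isSome_iff_exists.1 hs
      exact absurd (Part.dom_iff_mem.2 ⟨y, Nat.Partrec.Code.evaln_sound hy⟩) hdom
    simpa [hz] using tendsto_const_nhds

/-- Determining convergence at `z = 1` is undecidable: the predicate on `(c, x)`
asserting that the series `∑ a_n` (with `a_n = haltCoeff c x n`) converges is not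
a computable predicate. -/
theorem series_convergence_at_one_undecidable :
    ¬ ComputablePred (fun p : Nat.Partrec.Code × ℕ =>
      ∃ L : ℝ, Tendsto
        (fun N : ℕ => ∑ n ∈ Finset.range N, (haltCoeff p.1 p.2 n : ℝ))
        atTop (nhds L)) := by
  intro h
  obtain ⟨f, hf, hpf⟩ := ComputablePred.computable_iff.1 h
  have h0 : ComputablePred (fun c : Nat.Partrec.Code => ¬ (Nat.Partrec.Code.eval c 0).Dom) := by
    refine ComputablePred.computable_iff.2 ⟨fun c => f (c, 0),
      hf.comp (Computable.id.pair (Computable.const 0)), ?_⟩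
    funext c
    have := congrFun hpf (c, 0)
    simp only at this
    rw [← haltCoeff_converges_iff c 0, this]
  exact ComputablePred.halting_problem 0 (h0.not.of_eq fun c => not_not)
end
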